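/- arXiv:1911.13000 — 2 statements merged into one kernel-verified Lean document; each statement's English description precedes it below -/
import Mathlib

section
/- Let X be a nonempty proper metric space (every closed bounded subset is compact) which is contractible as a topological space. Let G be a group acting on X by isometries such that the orbit space X/G (the quotient of X by the orbit equivalence relation, with the quotient topology) is compact. Then X is uniformly contractible: there exists a function C : (0, ∞) → ℝ with C(R) ≥ R for all R > 0, such that for every x ∈ X and every R > 0, the open metric ball B_R(x) is contractible inside B_{C(R)}(x); that is, the inclusion map B_R(x) ↪ B_{C(R)}(x) is null-homotopic. -/
/-!
Cocompactness gives a ball `B_r(p)` meeting every orbit, so every ball `B_R(x)` is carried by an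
isometry of the action into `B_{r+R}(p)`. A contraction `H` of `X` moves the compact set
`closedBall p (r + R)` only within a bounded set, so it contracts every ball `B_R(y)` with
`y ∈ B_r(p)` inside a concentric ball of one radius `C R`; the isometries transport these
contractions to all other balls.
-/

open Metric Set unitInterval

theorem exists_smul_mem_ball_of_compactSpace_quotient {G X : Type*} [Group G] [MetricSpace X]
    [MulAction G X] [ContinuousConstSMul G X] [CompactSpace (Quotient (MulAction.orbitRel G X))]
    (p : X) : ∃ r : ℝ, ∀ x : X, ∃ g : G, g • x ∈ ball p r := by
  let π := Quotient.mk (MulAction.orbitRel G X)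
  obtain ⟨n, hn⟩ := isCompact_univ.elim_directed_cover (fun n : ℕ => π '' ball p n)
    (fun n => isOpenMap_quotient_mk'_mul _ isOpen_ball)
    (by rw [← image_iUnion, iUnion_ball_nat, image_univ_of_surjective Quotient.mk_surjective])
    (Monotone.directed_le fun m n hmn => image_mono (ball_subset_ball (by exact_mod_cast hmn)))
  refine ⟨n, fun x => ?_⟩
  obtain ⟨y, hy, hyx⟩ := hn (mem_univ (π x))
  obtain ⟨g, rfl⟩ := MulAction.mem_orbit_iff.mp (Quotient.exact hyx)
  exact ⟨g, hy⟩

namespace ContinuousMap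

theorem nullhomotopic_inclusion_of_homotopy {X : Type*} [TopologicalSpace X] {x₀ : X}
    {A B : Set X} (hAB : A ⊆ B) (H : Homotopy (ContinuousMap.id X) (const X x₀)) (hx₀ : x₀ ∈ B)
    (hH : ∀ t a, a ∈ A → H (t, a) ∈ B) :
    (inclusion hAB).Nullhomotopic :=
  ⟨⟨x₀, hx₀⟩, ⟨{
    toFun := fun q => ⟨H (q.1, q.2), hH q.1 q.2 q.2.2⟩
    continuous_toFun := by fun_prop
    map_zero_left := fun a => Subtype.ext (H.apply_zero a)
    map_one_left := fun a => Subtype.ext (H.apply_one a) }⟩⟩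

variable {X Y : Type*} [MetricSpace X] [MetricSpace Y]

theorem nullhomotopic_inclusion_ball_of_isometryEquiv (φ : X ≃ᵢ Y) {x : X} {R C : ℝ}
    (hRC : R ≤ C) (h : (inclusion (ball_subset_ball hRC : ball (φ x) R ⊆ _)).Nullhomotopic) :
    (inclusion (ball_subset_ball hRC : ball x R ⊆ _)).Nullhomotopic := by
  have hφ : MapsTo φ (ball x R) (ball (φ x) R) := fun a ha => by rwa [mem_ball, φ.dist_eq]
  have hψ : MapsTo φ.symm (ball (φ x) C) (ball x C) := fun a ha => by
    rwa [mem_ball, ← φ.dist_eq, φ.apply_symm_apply]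
  convert (h.comp_right ⟨hψ.restrict, φ.symm.continuous.restrict hψ⟩).comp_left
    ⟨hφ.restrict, φ.continuous.restrict hφ⟩
  ext a
  exact (φ.symm_apply_apply a).symm

theorem exists_nullhomotopic_inclusion_ball_of_mem_ball [ProperSpace X] [ContractibleSpace X]
    (p : X) (r : ℝ) {R : ℝ} (hR : 0 < R) :
    ∃ C : ℝ, ∃ hRC : R ≤ C, ∀ y ∈ ball p r,
      (inclusion (ball_subset_ball hRC : ball y R ⊆ _)).Nullhomotopic := by
  obtain ⟨x₀, ⟨H⟩⟩ := id_nullhomotopic X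
  obtain ⟨M, hMR, hM⟩ := ((isCompact_univ.prod (isCompact_closedBall p (r + R))).image
    H.continuous).isBounded.subset_closedBall_lt (R - r) p
  have hH : ∀ t a, a ∈ closedBall p (r + R) → dist (H (t, a)) p ≤ M := fun t a ha =>
    hM (mem_image_of_mem _ (mk_mem_prod (mem_univ t) ha))
  refine ⟨M + r, by linarith, fun y hy => nullhomotopic_inclusion_of_homotopy _ H ?_ ?_⟩
  · have hx₀ := hH 1 y (mem_closedBall.2 (by linarith [mem_ball.1 hy]))
    rw [H.apply_one, const_apply] at hx₀
    rw [mem_ball]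
    linarith [dist_triangle x₀ p y, mem_ball'.1 hy]
  · intro t a ha
    have hHa := hH t a (mem_closedBall.2 (by
      linarith [dist_triangle a y p, mem_ball.1 ha, mem_ball.1 hy]))
    rw [mem_ball]
    linarith [dist_triangle (H (t, a)) p y, mem_ball'.1 hy]

end ContinuousMap

/-- Lemma 2.18: a nonempty proper, contractible metric space admitting a
cocompact isometric group action is uniformly contractible: there is a function
`C : ℝ → ℝ` with `C R ≥ R` for all `R > 0` such that every open ball `B_R(x)`
is contractible inside the concentric ball `B_{C R}(x)`. -/
theorem uniformly_contractible_of_cocompact {X : Type*} [MetricSpace X]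
    [ProperSpace X] [Nonempty X] [ContractibleSpace X]
    {G : Type*} [Group G] [MulAction G X]
    (hiso : ∀ g : G, Isometry (fun x : X => g • x))
    (hcocompact : CompactSpace (Quotient (MulAction.orbitRel G X))) :
    ∃ C : ℝ → ℝ, ∀ R > (0 : ℝ), ∃ hR : R ≤ C R, ∀ x : X,
      ContinuousMap.Nullhomotopic
        (⟨Set.inclusion (Metric.ball_subset_ball hR),
          continuous_inclusion (Metric.ball_subset_ball hR)⟩ :
          C(Metric.ball x R, Metric.ball x (C R))) := by
  have : IsIsometricSMul G X := ⟨hiso⟩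
  obtain ⟨p⟩ := ‹Nonempty X›
  obtain ⟨r, hr⟩ := exists_smul_mem_ball_of_compactSpace_quotient (G := G) p
  choose! C hRC hC using fun R (hR : 0 < R) =>
    ContinuousMap.exists_nullhomotopic_inclusion_ball_of_mem_ball p r hR
  refine ⟨C, fun R hR => ⟨hRC R hR, fun x => ?_⟩⟩
  obtain ⟨g, hg⟩ := hr x
  exact ContinuousMap.nullhomotopic_inclusion_ball_of_isometryEquiv
    (IsometryEquiv.constSMul g) (hRC R hR) (hC R hR _ hg)
end

section
/- Let X be a proper metric space (every closed bounded subset is compact), Y a metric space, and f : X → Y a continuous map which is metrically proper, meaning that for every bounded subset B of Y the preimage f⁻¹(B) is bounded in X. Let A ⊆ Y be a compact subset, let p ∈ X, and let 0 < R' < R be real numbers such that f⁻¹(A) is contained in the closed ball of radius R' around p. Then there exists ε > 0 such that the preimage of the open ε-thickening of A (the set of points of Y at distance less than ε from A) is contained in the open ball of radius R around p. -/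
/-- Intermediate claim in the proof of Lemma 2.2: if `f : X → Y` is a continuous
metrically proper map from a proper metric space, `A ⊆ Y` is compact, and
`f ⁻¹ A` lies in the closed ball of radius `R' < R` around `p`, then the
preimage of some open `ε`-thickening of `A` lies in the open ball of radius `R`
around `p`. -/
theorem preimage_thickening_subset_ball {X Y : Type*} [MetricSpace X] [MetricSpace Y]
    [ProperSpace X] (f : X → Y) (hcont : Continuous f)
    (hproper : ∀ B : Set Y, Bornology.IsBounded B → Bornology.IsBounded (f ⁻¹' B))
    (A : Set Y) (hA : IsCompact A) (p : X) (R' R : ℝ) (hR' : 0 < R') (hR'R : R' < R)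
    (hpre : f ⁻¹' A ⊆ Metric.closedBall p R') :
    ∃ ε > (0 : ℝ), f ⁻¹' {y : Y | ∃ a ∈ A, dist y a < ε} ⊆ Metric.ball p R := by
  rcases A.eq_empty_or_nonempty with rfl | hAne
  · exact ⟨1, one_pos, by simp⟩
  -- the 1-thickening of A is bounded
  have hBb : Bornology.IsBounded (Metric.thickening 1 A) :=
    hA.isBounded.thickening
  -- so its preimage has compact closure
  have hCcpt : IsCompact (closure (f ⁻¹' Metric.thickening 1 A)) :=
    (hproper _ hBb).isCompact_closure
  set S : Set X := closure (f ⁻¹' Metric.thickening 1 A) ∩ (Metric.ball p R)ᶜ with hS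
  have hScpt : IsCompact S := hCcpt.inter_right (Metric.isOpen_ball.isClosed_compl)
  -- dist (f x) A is positive on S
  have hpos : ∀ x ∈ S, 0 < Metric.infDist (f x) A := by
    intro x hx
    refine (hA.isClosed.notMem_iff_infDist_pos hAne).mp ?_
    intro hfx
    exact hx.2 (Metric.closedBall_subset_ball hR'R (hpre hfx))
  rcases S.eq_empty_or_nonempty with hSe | hSne
  · refine ⟨min 1 1, by norm_num, ?_⟩
    intro x hx
    by_contra hxb
    have hx1 : x ∈ S := by
      refine ⟨subset_closure ?_, hxb⟩
      obtain ⟨a, ha, hd⟩ := hx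
      exact Metric.mem_thickening_iff.mpr ⟨a, ha, lt_of_lt_of_le hd (min_le_left _ _)⟩
    rw [hSe] at hx1; exact hx1
  · obtain ⟨x₀, hx₀, hmin⟩ := hScpt.exists_isMinOn hSne
      ((Metric.continuous_infDist_pt A).comp hcont).continuousOn
    set δ := Metric.infDist (f x₀) A with hδ
    refine ⟨min 1 δ, lt_min one_pos (hpos x₀ hx₀), ?_⟩
    intro x hx
    by_contra hxb
    have hxS : x ∈ S := by
      refine ⟨subset_closure ?_, hxb⟩
      obtain ⟨a, ha, hd⟩ := hx
      exact Metric.mem_thickening_iff.mpr ⟨a, ha, lt_of_lt_of_le hd (min_le_left _ _)⟩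
    obtain ⟨a, ha, hd⟩ := hx
    have h1 : Metric.infDist (f x) A < δ :=
      lt_of_le_of_lt (Metric.infDist_le_dist_of_mem ha) (lt_of_lt_of_le hd (min_le_right _ _))
    exact absurd (hmin hxS) (not_le.mpr h1)
end
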